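/- Let k be a positive integer, X a topological space with S(2k)-spread at most κ (κ infinite), C ⊆ X, and for each x ∈ C let U^x be an open S(2k-1)-neighborhood of x. Then there exists an S(2k)-discrete subset A of C with |A| ≤ κ such that C ⊆ θ_{2k}(A) ∪ ⋃{cl(U^x) : x ∈ A}. -/

import Mathlib

/-!
Choose, by Zorn's lemma, a maximal family `G` of pairs `(x, W)` with `x ∈ C` and `W ⊆ U x` an open
S(2k-1)-neighborhood of `x`, such that for distinct pairs `p, q ∈ G` the point of `q` avoids the
closure of the neighborhood of `p`. The points of `G` form an S(2k)-discrete set `A`, so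
`#A ≤ s_{2k}(X) ≤ κ`. If `y ∈ C` lay neither in `θ_{2k}(A)` nor in any `cl(U x)` with `x ∈ A`, some
open S(2k-1)-neighborhood `W` of `y` would have `cl(W) ∩ A = ∅`, and `(y, W ∩ U y)` could be added
to `G`, contradicting maximality.
-/

open Cardinal Set

universe u

variable {X : Type u}

/-- `x` is S(n)-separated from `A`. -/
def SSep [TopologicalSpace X] : ℕ → X → Set X → Prop
  | 0, x, A => x ∉ closure A
  | (n+1), x, A => ∃ U : ℕ → Set X, (∀ i ≤ n, IsOpen (U i)) ∧ x ∈ U 0 ∧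
      (∀ i < n, closure (U i) ⊆ U (i+1)) ∧ closure (U n) ∩ A = ∅

/-- `X` is an S(n)-space. -/
def SSpace (n : ℕ) (X : Type u) [TopologicalSpace X] : Prop :=
  ∀ x y : X, x ≠ y → SSep n x {y}

/-- `U` is an S(2k-1)-neighborhood of `x` (for `k ≥ 1`). -/
def SOddNhd [TopologicalSpace X] (k : ℕ) (x : X) (U : Set X) : Prop :=
  ∃ V : ℕ → Set X, (∀ i < k, IsOpen (V i)) ∧ x ∈ V 0 ∧
    (∀ i, i + 1 < k → closure (V i) ⊆ V (i+1)) ∧ V (k-1) ⊆ U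

/-- `U` is an S(2k)-neighborhood of `x` (for `k ≥ 1`). -/
def SEvenNhd [TopologicalSpace X] (k : ℕ) (x : X) (U : Set X) : Prop :=
  ∃ V : ℕ → Set X, (∀ i < k, IsOpen (V i)) ∧ x ∈ V 0 ∧
    (∀ i, i + 1 < k → closure (V i) ⊆ V (i+1)) ∧ closure (V (k-1)) ⊆ U

/-- `U` is an open S(2k-1)-neighborhood of `x`. -/
def SOpenNhd [TopologicalSpace X] (k : ℕ) (x : X) (U : Set X) : Prop :=
  IsOpen U ∧ SOddNhd k x U

/-- `U` is an S(2k-1)-open set. -/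
def SOpen [TopologicalSpace X] (k : ℕ) (U : Set X) : Prop :=
  IsOpen U ∧ ∃ x, SOddNhd k x U

/-- The S(2k-1)-closure `θ_{2k-1}(A)`. -/
def thetaOdd [TopologicalSpace X] (k : ℕ) (A : Set X) : Set X :=
  {x | ∀ U : Set X, SOpenNhd k x U → (U ∩ A).Nonempty}

/-- The S(2k)-closure `θ_{2k}(A)`. -/
def thetaEven [TopologicalSpace X] (k : ℕ) (A : Set X) : Set X :=
  {x | ∀ U : Set X, SOpenNhd k x U → (closure U ∩ A).Nonempty}

/-- `D` is S(2k-1)-discrete. -/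
def SOddDiscrete [TopologicalSpace X] (k : ℕ) (D : Set X) : Prop :=
  ∀ x ∈ D, ∃ U : Set X, SOpenNhd k x U ∧ U ∩ D = {x}

/-- `D` is S(2k)-discrete. -/
def SEvenDiscrete [TopologicalSpace X] (k : ℕ) (D : Set X) : Prop :=
  ∀ x ∈ D, ∃ U : Set X, SOpenNhd k x U ∧ closure U ∩ D = {x}

/-- The S(2k-1)-spread `s_{2k-1}(X)`. -/
noncomputable def spreadOdd (k : ℕ) (X : Type u) [TopologicalSpace X] : Cardinal :=
  (⨆ D : {D : Set X // SOddDiscrete k D}, #D.1) ⊔ Cardinal.aleph0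

/-- The S(2k)-spread `s_{2k}(X)`. -/
noncomputable def spreadEven (k : ℕ) (X : Type u) [TopologicalSpace X] : Cardinal :=
  (⨆ D : {D : Set X // SEvenDiscrete k D}, #D.1) ⊔ Cardinal.aleph0

/-- The S(2k-1)-cellularity `c_{2k-1}(X)`. -/
noncomputable def cellOdd (k : ℕ) (X : Type u) [TopologicalSpace X] : Cardinal :=
  (⨆ F : {F : Set (Set X) // (∀ U ∈ F, SOpen k U ∧ U.Nonempty) ∧
      (∀ U ∈ F, ∀ V ∈ F, U ≠ V → U ∩ V = ∅)}, #F.1) ⊔ Cardinal.aleph0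

/-- The S(2k)-cellularity `c_{2k}(X)`. -/
noncomputable def cellEven (k : ℕ) (X : Type u) [TopologicalSpace X] : Cardinal :=
  (⨆ F : {F : Set (Set X) // (∀ U ∈ F, SOpen k U ∧ U.Nonempty) ∧
      (∀ U ∈ F, ∀ V ∈ F, U ≠ V → closure U ∩ closure V = ∅)}, #F.1) ⊔ Cardinal.aleph0

/-- The S(2k-1)-character `χ_{2k-1}(X)`. -/
noncomputable def charOdd (k : ℕ) (X : Type u) [TopologicalSpace X] : Cardinal :=
  sInf {c | Cardinal.aleph0 ≤ c ∧ ∀ x : X, ∃ B : Set (Set X), #B ≤ c ∧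
    (∀ U ∈ B, SOpenNhd k x U) ∧
    ∀ U : Set X, SOpenNhd k x U → ∃ V ∈ B, V ⊆ U}

/-- The S(2k)-character `χ_{2k}(X)`. -/
noncomputable def charEven (k : ℕ) (X : Type u) [TopologicalSpace X] : Cardinal :=
  sInf {c | Cardinal.aleph0 ≤ c ∧ ∀ x : X, ∃ B : Set (Set X), #B ≤ c ∧
    (∀ V ∈ B, IsClosed V ∧ SOddNhd k x V) ∧
    ∀ W : Set X, SOpenNhd k x W → ∃ V ∈ B, V ⊆ closure W}

/-- The S(2k-1)-pseudocharacter `ψ_{2k-1}(X)`. -/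
noncomputable def psiOdd (k : ℕ) (X : Type u) [TopologicalSpace X] : Cardinal :=
  sInf {c | Cardinal.aleph0 ≤ c ∧ ∀ x : X, ∃ B : Set (Set X), #B ≤ c ∧
    (∀ U ∈ B, SOpenNhd k x U) ∧ ⋂₀ B = {x}}

/-- The S(2k)-pseudocharacter `ψ_{2k}(X)`. -/
noncomputable def psiEven (k : ℕ) (X : Type u) [TopologicalSpace X] : Cardinal :=
  sInf {c | Cardinal.aleph0 ≤ c ∧ ∀ x : X, ∃ B : Set (Set X), #B ≤ c ∧
    (∀ U ∈ B, SOpenNhd k x U) ∧ (⋂ U ∈ B, closure U) = {x}}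

/-- The usual pseudocharacter `ψ(X)`. -/
noncomputable def psi (X : Type u) [TopologicalSpace X] : Cardinal :=
  sInf {c | Cardinal.aleph0 ≤ c ∧ ∀ x : X, ∃ B : Set (Set X), #B ≤ c ∧
    (∀ U ∈ B, IsOpen U) ∧ ⋂₀ B = {x}}

theorem exists_maximal_subset_pairwise {α : Type*} (P : Set α) (r : α → α → Prop) :
    ∃ G, Maximal (fun G => G ⊆ P ∧ G.Pairwise r) G := by
  apply zorn_subset
  intro c hc hchain
  exact ⟨⋃₀ c, ⟨sUnion_subset fun G hG => (hc hG).1,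
    hchain.pairwise_sUnion.2 fun G hG => (hc hG).2⟩, fun _ => subset_sUnion_of_mem⟩

section SNeighborhoods

variable [TopologicalSpace X] {k : ℕ} {x : X} {U W : Set X}

theorem SOddNhd.mem (hk : 1 ≤ k) (h : SOddNhd k x U) : x ∈ U := by
  obtain ⟨V, -, hx, hchain, hsub⟩ := h
  have hV : ∀ i ≤ k - 1, x ∈ V i := by
    intro i hi
    induction i with
    | zero => exact hx
    | succ n ih => exact hchain n (by omega) (subset_closure (ih (by omega)))
  exact hsub (hV (k - 1) le_rfl)

theorem SOpenNhd.inter (hU : SOpenNhd k x U) (hW : SOpenNhd k x W) :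
    SOpenNhd k x (U ∩ W) := by
  obtain ⟨hUo, V, hVo, hxV, hVc, hVU⟩ := hU
  obtain ⟨hWo, V', hVo', hxV', hVc', hVW⟩ := hW
  refine ⟨hUo.inter hWo, fun i => V i ∩ V' i, fun i hi => (hVo i hi).inter (hVo' i hi),
    ⟨hxV, hxV'⟩, fun i hi => ?_, inter_subset_inter hVU hVW⟩
  exact closure_inter_subset_inter_closure _ _ |>.trans (inter_subset_inter (hVc i hi) (hVc' i hi))

theorem SEvenDiscrete.mk_le_spreadEven {D : Set X} (hD : SEvenDiscrete k D) :
    #D ≤ spreadEven k X :=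
  (le_ciSup (f := fun D : {D : Set X // SEvenDiscrete k D} => #D.1)
    bddAbove_of_small ⟨D, hD⟩).trans le_sup_left

def sNhdPairs (k : ℕ) (C : Set X) (U : X → Set X) : Set (X × Set X) :=
  {p | p.1 ∈ C ∧ SOpenNhd k p.1 p.2 ∧ p.2 ⊆ U p.1}

def ClosureSeparated (G : Set (X × Set X)) : Prop :=
  G.Pairwise fun p q => q.1 ∉ closure p.2

theorem ClosureSeparated.sEvenDiscrete_image_fst {C : Set X} {U : X → Set X}
    {G : Set (X × Set X)} (hG : ClosureSeparated G) (hk : 1 ≤ k) (hGP : G ⊆ sNhdPairs k C U) :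
    SEvenDiscrete k (Prod.fst '' G) := by
  rintro _ ⟨p, hp, rfl⟩
  have hnhd : SOpenNhd k p.1 p.2 := (hGP hp).2.1
  refine ⟨p.2, hnhd, Subset.antisymm ?_ ?_⟩
  · rintro _ ⟨hq, q, hqG, rfl⟩
    by_contra hne
    exact hG hp hqG (fun hpq => hne (congrArg Prod.fst hpq.symm)) hq
  · rintro _ rfl
    exact ⟨subset_closure (hnhd.2.mem hk), p, hp, rfl⟩

theorem Maximal.subset_thetaEven_union {C : Set X} {U : X → Set X} {G : Set (X × Set X)}
    (hk : 1 ≤ k) (hU : ∀ x ∈ C, SOpenNhd k x (U x))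
    (hG : Maximal (fun G => G ⊆ sNhdPairs k C U ∧ ClosureSeparated G) G) :
    C ⊆ thetaEven k (Prod.fst '' G) ∪ ⋃ x ∈ Prod.fst '' G, closure (U x) := by
  intro y hyC
  by_contra hy
  simp only [mem_union, not_or] at hy
  obtain ⟨hyθ, hyU⟩ := hy
  obtain ⟨W, hW, hWA⟩ : ∃ W, SOpenNhd k y W ∧ closure W ∩ Prod.fst '' G = ∅ := by
    simpa [thetaEven, not_nonempty_iff_eq_empty] using hyθ
  set p₀ : X × Set X := (y, W ∩ U y)
  have hp₀ : p₀ ∈ sNhdPairs k C U := ⟨hyC, hW.inter (hU y hyC), inter_subset_right⟩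
  have hsep : ClosureSeparated (insert p₀ G) := by
    refine pairwise_insert.2 ⟨hG.prop.2, fun q hq _ => ⟨fun hqW => ?_, fun hyq => ?_⟩⟩
    · exact hWA.subset ⟨closure_mono inter_subset_left hqW, q, hq, rfl⟩
    · exact hyU (mem_biUnion ⟨q, hq, rfl⟩ (closure_mono (hG.prop.1 hq).2.2 hyq))
  have hp₀G : p₀ ∈ G := hG.mem_of_prop_insert ⟨insert_subset hp₀ hG.prop.1, hsep⟩
  exact hyU (mem_biUnion ⟨p₀, hp₀G, rfl⟩ (subset_closure ((hU y hyC).2.mem hk)))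

end SNeighborhoods

theorem stmt10_general (k : ℕ) (hk : 1 ≤ k) (X : Type u) [TopologicalSpace X]
    (κ : Cardinal) (hs : spreadEven k X ≤ κ)
    (C : Set X) (U : X → Set X) (hU : ∀ x ∈ C, SOpenNhd k x (U x)) :
    ∃ A : Set X, A ⊆ C ∧ SEvenDiscrete k A ∧ #A ≤ κ ∧
      C ⊆ thetaEven k A ∪ ⋃ x ∈ A, closure (U x) := by
  obtain ⟨G, hG⟩ : ∃ G, Maximal (fun G => G ⊆ sNhdPairs k C U ∧ ClosureSeparated G) G :=
    exists_maximal_subset_pairwise _ _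
  have hdisc := hG.prop.2.sEvenDiscrete_image_fst hk hG.prop.1
  exact ⟨Prod.fst '' G, image_subset_iff.2 fun p hp => (hG.prop.1 hp).1, hdisc,
    hdisc.mk_le_spreadEven.trans hs, hG.subset_thetaEven_union hk hU⟩

theorem stmt10 (k : ℕ) (hk : 1 ≤ k) (X : Type u) [TopologicalSpace X]
    (κ : Cardinal) (hκ : Cardinal.aleph0 ≤ κ) (hs : spreadEven k X ≤ κ)
    (C : Set X) (U : X → Set X) (hU : ∀ x ∈ C, SOpenNhd k x (U x)) :
    ∃ A : Set X, A ⊆ C ∧ SEvenDiscrete k A ∧ #A ≤ κ ∧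
      C ⊆ thetaEven k A ∪ ⋃ x ∈ A, closure (U x) :=
  stmt10_general k hk X κ hs C U hU
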